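/- Let ν be a Borel measure on Q = [-π/2, π/2]² with both coordinate marginals equal to λ and symmetric under (φ, φ⁺) ↦ (φ⁺, φ). For each n, partition Q into n² squares Q_{ij}^n = Θ_i^n × Θ_j^n. Then there exist rational nonnegative numbers c_{ij}^n with c_{ij}^n = c_{ji}^n, Σ_j c_{ij}^n = 2/n for every i, and n² · max_{i,j} |ν(Q_{ij}^n) − c_{ij}^n| → 0 as n → ∞. -/

import Mathlib

open Real MeasureTheory Set Filter Topology

noncomputable def lam : Measure ℝ :=
  (volume.restrict (Set.Icc (-(π/2)) (π/2))).withDensity fun φ => ENNReal.ofReal (Real.cos φ)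

noncomputable def Qsq (n i j : ℕ) : Set (ℝ × ℝ) :=
  Set.Icc (Real.arcsin (-1 + 2*((i:ℝ)-1)/n)) (Real.arcsin (-1 + 2*(i:ℝ)/n)) ×ˢ
  Set.Icc (Real.arcsin (-1 + 2*((j:ℝ)-1)/n)) (Real.arcsin (-1 + 2*(j:ℝ)/n))


/-!
Row `i` of the symmetric matrix `ν (Qsq n i j)` sums to `λ(Θ_i) = 2/n`: the squares of the row
tile the strip `Θ_i × [-π/2, π/2]` up to horizontal lines, which are `ν`-null because the second
marginal `λ` has no atoms, and the strip has full measure in `Θ_i × ℝ`. Rounding the off-diagonal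
entries down to rationals symmetrically, within `δ / (n + 1)`, and letting each diagonal entry
absorb what its row lost gives a symmetric nonnegative rational matrix with the exact row sums and
entrywise error at most `δ`; take `δ = (n + 1)⁻³`.
-/

theorem exists_rat_le_of_sub_le {x δ : ℝ} (hx : 0 ≤ x) (hδ : 0 < δ) :
    ∃ q : ℚ, 0 ≤ q ∧ (q : ℝ) ≤ x ∧ x - q ≤ δ := by
  obtain ⟨q, hq₁, hq₂⟩ := exists_rat_btwn (sub_lt_self x hδ)
  refine ⟨max q 0, le_max_right _ _, ?_, ?_⟩ <;> push_cast
  · exact max_le hq₂.le hx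
  · linarith [le_max_left (q : ℝ) 0]

theorem exists_symm_rat_le_of_sub_le {ι : Type*} {A : ι → ι → ℝ} (hA₀ : ∀ i j, 0 ≤ A i j)
    (hA : ∀ i j, A i j = A j i) {δ : ℝ} (hδ : 0 < δ) :
    ∃ q : ι → ι → ℚ, (∀ i j, 0 ≤ q i j) ∧ (∀ i j, q i j = q j i) ∧
      (∀ i j, (q i j : ℝ) ≤ A i j) ∧ ∀ i j, A i j - q i j ≤ δ := by
  choose p hp₀ hp₁ hp₂ using fun i j => exists_rat_le_of_sub_le (hA₀ i j) hδ
  refine ⟨fun i j => min (p i j) (p j i), fun i j => le_min (hp₀ i j) (hp₀ j i),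
    fun i j => min_comm _ _, fun i j => ?_, fun i j => ?_⟩ <;> push_cast
  · exact min_le_of_left_le (hp₁ i j)
  · rcases min_choice (p i j : ℝ) (p j i) with h | h <;> rw [h]
    · exact hp₂ i j
    · rw [hA]; exact hp₂ j i

theorem exists_symm_rat_approx_of_rowSum {ι : Type*} [DecidableEq ι] (s : Finset ι)
    {A : ι → ι → ℝ} (hA₀ : ∀ i j, 0 ≤ A i j) (hA : ∀ i j, A i j = A j i) {r : ℚ}
    (hrow : ∀ i ∈ s, ∑ j ∈ s, A i j = r) {δ : ℝ} (hδ : 0 < δ) :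
    ∃ c : ι → ι → ℚ, (∀ i j, 0 ≤ c i j) ∧ (∀ i j, c i j = c j i) ∧
      (∀ i ∈ s, ∑ j ∈ s, c i j = r) ∧ ∀ i ∈ s, ∀ j ∈ s, |A i j - c i j| ≤ δ := by
  set δ' := δ / (s.card + 1)
  have hcard : s.card * δ' ≤ δ := by
    rw [mul_div_assoc', div_le_iff₀ (by positivity)]
    nlinarith
  obtain ⟨q, hq₀, hq, hqA, hAq⟩ := exists_symm_rat_le_of_sub_le hA₀ hA (δ := δ') (by positivity)
  set d : ι → ℚ := fun i => r - ∑ k ∈ s.erase i, q i k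
  have hd : ∀ i ∈ s, (d i : ℝ) = A i i + ∑ k ∈ s.erase i, (A i k - q i k) := fun i hi => by
    push_cast [d]
    rw [Finset.sum_sub_distrib, ← hrow i hi, ← Finset.add_sum_erase _ _ hi]
    ring
  have herr : ∀ i ∈ s, ∑ k ∈ s.erase i, (A i k - q i k) ∈ Icc 0 δ := fun i hi => by
    refine ⟨Finset.sum_nonneg fun k _ => sub_nonneg.2 (hqA i k), ?_⟩
    calc ∑ k ∈ s.erase i, (A i k - q i k) ≤ ∑ k ∈ s.erase i, δ' :=
          Finset.sum_le_sum fun k _ => hAq i k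
      _ ≤ s.card * δ' := by
        rw [Finset.sum_const, nsmul_eq_mul]
        gcongr
        exact Finset.erase_subset i s
      _ ≤ δ := hcard
  have hd₀ : ∀ i ∈ s, 0 ≤ d i := fun i hi => by
    have : (0 : ℝ) ≤ d i := by rw [hd i hi]; exact add_nonneg (hA₀ i i) (herr i hi).1
    exact_mod_cast this
  -- `d i` may be negative for `i ∉ s`; on `s` the `max` is inert.
  refine ⟨fun i j => if i = j then max (d i) 0 else q i j, ?_, ?_, ?_, ?_⟩ <;> beta_reduce
  · intro i j
    split_ifs
    exacts [le_max_right _ _, hq₀ i j]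
  · intro i j
    by_cases h : i = j
    · subst h; rfl
    · simp only [if_neg h, if_neg (Ne.symm h), hq]
  · intro i hi
    rw [← Finset.add_sum_erase _ _ hi, if_pos rfl, max_eq_left (hd₀ i hi),
      Finset.sum_congr rfl fun k hk => if_neg (Finset.ne_of_mem_erase hk).symm, sub_add_cancel]
  · intro i hi j _
    by_cases h : i = j
    · subst h
      push_cast [if_pos rfl, max_eq_left (hd₀ i hi)]
      rw [hd i hi, sub_add_cancel_left, abs_neg, abs_of_nonneg (herr i hi).1]
      exact (herr i hi).2
    · rw [if_neg h, abs_of_nonneg (sub_nonneg.2 (hqA i j))]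
      exact (hAq i j).trans (div_le_self hδ.le (le_add_of_nonneg_left (Nat.cast_nonneg _)))

section IntervalPartition

variable {α : Type*} [LinearOrder α] [TopologicalSpace α] [OrderClosedTopology α]
  [MeasurableSpace α] [OpensMeasurableSpace α]

theorem measure_Icc_add_measure_Icc (μ : Measure α) [NullSingletonClass μ] {a b c : α}
    (hab : a ≤ b) (hbc : b ≤ c) : μ (Icc a b) + μ (Icc b c) = μ (Icc a c) := by
  have hdisj : Disjoint (Icc a b) (Ioc b c) :=
    Set.disjoint_left.2 fun _ hx hx' => (not_lt.2 hx.2) hx'.1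
  rw [← measure_congr (Ioc_ae_eq_Icc (μ := μ) (a := b) (b := c)),
    ← measure_union hdisj measurableSet_Ioc, Icc_union_Ioc_eq_Icc hab hbc]

theorem sum_measure_Icc_of_monotone (μ : Measure α) [NullSingletonClass μ] {g : ℕ → α}
    (hg : Monotone g) (m : ℕ) :
    ∑ k ∈ Finset.range m, μ (Icc (g k) (g (k + 1))) = μ (Icc (g 0) (g m)) := by
  induction m with
  | zero => simp
  | succ m ih =>
    rw [Finset.sum_range_succ, ih,
      measure_Icc_add_measure_Icc μ (hg (Nat.zero_le m)) (hg (Nat.le_succ m))]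

theorem sum_measure_prod_Icc_of_monotone {β : Type*} [MeasurableSpace β] (ν : Measure (β × α))
    [NullSingletonClass (ν.map Prod.snd)] (S : Set β) {g : ℕ → α} (hg : Monotone g) (m : ℕ) :
    ∑ k ∈ Finset.range m, ν (S ×ˢ Icc (g k) (g (k + 1))) = ν (S ×ˢ Icc (g 0) (g m)) := by
  set ρ := (ν.restrict (Prod.fst ⁻¹' S)).map Prod.snd
  have hρ : ∀ t, MeasurableSet t → ρ t = ν (S ×ˢ t) := fun t ht => by
    rw [Measure.map_apply measurable_snd ht, Measure.restrict_apply (measurable_snd ht),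
      Set.prod_eq, Set.inter_comm]
  have hρle : ρ ≤ ν.map Prod.snd := Measure.map_mono Measure.restrict_le_self measurable_snd
  have : NullSingletonClass ρ :=
    ⟨fun x => nonpos_iff_eq_zero.1 ((hρle {x}).trans_eq (measure_singleton x))⟩
  simp_rw [← hρ _ measurableSet_Icc]
  exact sum_measure_Icc_of_monotone ρ hg m

end IntervalPartition

theorem measure_prod_comm_of_map_swap {α : Type*} [MeasurableSpace α] {ν : Measure (α × α)}
    (hswap : ν.map Prod.swap = ν) {s t : Set α} (hs : MeasurableSet s) (ht : MeasurableSet t) :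
    ν (s ×ˢ t) = ν (t ×ˢ s) :=
  calc ν (s ×ˢ t) = ν.map Prod.swap (s ×ˢ t) := by rw [hswap]
    _ = ν (t ×ˢ s) := by rw [Measure.map_apply measurable_swap (hs.prod ht), preimage_swap_prod]

theorem lam_Icc {c d : ℝ} (hc : -(π / 2) ≤ c) (hd : d ≤ π / 2) (hcd : c ≤ d) :
    lam (Icc c d) = ENNReal.ofReal (sin d - sin c) := by
  have hsub : Icc c d ⊆ Icc (-(π / 2)) (π / 2) := Icc_subset_Icc hc hd
  rw [lam, withDensity_apply _ measurableSet_Icc, Measure.restrict_restrict measurableSet_Icc,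
    inter_eq_self_of_subset_left hsub, ← ofReal_integral_eq_lintegral_ofReal]
  · rw [integral_Icc_eq_integral_Ioc, ← intervalIntegral.integral_of_le hcd, integral_cos]
  · exact continuous_cos.continuousOn.integrableOn_compact isCompact_Icc
  · filter_upwards [ae_restrict_mem measurableSet_Icc] with x hx
    exact cos_nonneg_of_mem_Icc (hsub hx)

theorem lam_Icc_arcsin {a b : ℝ} (ha : -1 ≤ a) (hab : a ≤ b) (hb : b ≤ 1) :
    lam (Icc (arcsin a) (arcsin b)) = ENNReal.ofReal (b - a) := by
  rw [lam_Icc (neg_pi_div_two_le_arcsin a) (arcsin_le_pi_div_two b) (monotone_arcsin hab),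
    sin_arcsin ha (hab.trans hb), sin_arcsin (ha.trans hab) hb]

theorem lam_compl_Icc : lam (Icc (-(π / 2)) (π / 2))ᶜ = 0 := by
  rw [lam, withDensity_apply _ measurableSet_Icc.compl,
    Measure.restrict_restrict measurableSet_Icc.compl]
  simp

instance nullSingletonClass_lam : NullSingletonClass lam := by
  rw [lam]
  infer_instance

noncomputable def gridPt (n : ℕ) (x : ℝ) : ℝ := arcsin (-1 + 2 * x / n)

theorem Qsq_eq (n i j : ℕ) :
    Qsq n i j = Icc (gridPt n (i - 1)) (gridPt n i) ×ˢ Icc (gridPt n (j - 1)) (gridPt n j) :=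
  rfl

theorem monotone_gridPt (n : ℕ) : Monotone (gridPt n) := fun _ _ h =>
  monotone_arcsin (by gcongr)

theorem gridPt_zero (n : ℕ) : gridPt n 0 = -(π / 2) := by simp [gridPt]

theorem gridPt_self {n : ℕ} (hn : 0 < n) : gridPt n n = π / 2 := by
  have : (-1 : ℝ) + 2 * n / n = 1 := by field_simp; ring
  rw [gridPt, this, arcsin_one]

theorem lam_Icc_gridPt {n i : ℕ} (hi₁ : 1 ≤ i) (hi₂ : i ≤ n) :
    lam (Icc (gridPt n (i - 1)) (gridPt n i)) = ENNReal.ofReal (2 / n) := by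
  have hn : (0 : ℝ) < n := by exact_mod_cast hi₁.trans hi₂
  have hi₁' : (1 : ℝ) ≤ i := by exact_mod_cast hi₁
  have hi₂' : (i : ℝ) ≤ n := by exact_mod_cast hi₂
  rw [gridPt, gridPt, lam_Icc_arcsin]
  · congr 1
    field_simp
    ring
  · have : 0 ≤ 2 * ((i : ℝ) - 1) / n := by positivity
    linarith
  · gcongr
    linarith
  · have : 2 * (i : ℝ) / n ≤ 2 := by rw [div_le_iff₀ hn]; linarith
    linarith

theorem sum_measure_Qsq {ν : Measure (ℝ × ℝ)} (h1 : ν.map Prod.fst = lam)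
    (h2 : ν.map Prod.snd = lam) {n i : ℕ} (hi₁ : 1 ≤ i) (hi₂ : i ≤ n) :
    ∑ j ∈ Finset.Icc 1 n, ν (Qsq n i j) = ENNReal.ofReal (2 / n) := by
  set Θ := Icc (gridPt n (i - 1)) (gridPt n i)
  have : NullSingletonClass (ν.map Prod.snd) := by rw [h2]; infer_instance
  have hsupp : Prod.snd ⁻¹' Icc (-(π / 2)) (π / 2) =ᵐ[ν] univ := by
    rw [ae_eq_univ, ← preimage_compl, ← Measure.map_apply measurable_snd measurableSet_Icc.compl,
      h2, lam_compl_Icc]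
  have hmono : Monotone fun k : ℕ => gridPt n k := (monotone_gridPt n).comp Nat.mono_cast
  calc ∑ j ∈ Finset.Icc 1 n, ν (Qsq n i j)
      = ∑ k ∈ Finset.range n, ν (Θ ×ˢ Icc (gridPt n k) (gridPt n (k + 1 : ℕ))) := by
        rw [← Finset.Ico_add_one_right_eq_Icc, Finset.sum_Ico_eq_sum_range, Nat.add_sub_cancel]
        refine Finset.sum_congr rfl fun k _ => ?_
        rw [Qsq_eq, add_comm 1 k, Nat.cast_succ, add_sub_cancel_right]
    _ = ν (Θ ×ˢ Icc (gridPt n 0) (gridPt n n)) := by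
        simpa using sum_measure_prod_Icc_of_monotone ν Θ hmono n
    _ = ν (Prod.fst ⁻¹' Θ) := by
        rw [gridPt_zero, gridPt_self (by omega), Set.prod_eq,
          measure_congr ((EventuallyEq.refl _ _).inter hsupp), inter_univ]
    _ = ENNReal.ofReal (2 / n) := by
        rw [← Measure.map_apply measurable_fst measurableSet_Icc, h1, lam_Icc_gridPt hi₁ hi₂]

theorem stmt9 (ν : Measure (ℝ × ℝ)) [IsFiniteMeasure ν]
    (h1 : ν.map Prod.fst = lam) (h2 : ν.map Prod.snd = lam)
    (hswap : ν.map Prod.swap = ν) :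
    ∃ c : ℕ → ℕ → ℕ → ℚ,
      (∀ n i j, 0 ≤ c n i j) ∧
      (∀ n i j, c n i j = c n j i) ∧
      (∀ n, 0 < n → ∀ i, 1 ≤ i → i ≤ n → ∑ j ∈ Finset.Icc 1 n, c n i j = 2/(n:ℚ)) ∧
      (∀ ε > (0:ℝ), ∃ N : ℕ, ∀ n : ℕ, N ≤ n → ∀ i j : ℕ, 1 ≤ i → i ≤ n → 1 ≤ j → j ≤ n →
        (n:ℝ)^2 * |(ν (Qsq n i j)).toReal - ((c n i j : ℚ) : ℝ)| < ε) := by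
  have hrow : ∀ n, ∀ i ∈ Finset.Icc 1 n,
      ∑ j ∈ Finset.Icc 1 n, (ν (Qsq n i j)).toReal = ((2 / n : ℚ) : ℝ) := fun n i hi => by
    obtain ⟨hi₁, hi₂⟩ := Finset.mem_Icc.1 hi
    rw [← ENNReal.toReal_sum fun j _ => measure_ne_top ν _, sum_measure_Qsq h1 h2 hi₁ hi₂,
      ENNReal.toReal_ofReal (by positivity), Rat.cast_div, Rat.cast_ofNat, Rat.cast_natCast]
  have hsymm : ∀ n i j, (ν (Qsq n i j)).toReal = (ν (Qsq n j i)).toReal := fun n i j => by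
    rw [Qsq_eq, Qsq_eq, measure_prod_comm_of_map_swap hswap measurableSet_Icc measurableSet_Icc]
  choose c hc₀ hc hcrow hcerr using fun n => exists_symm_rat_approx_of_rowSum (Finset.Icc 1 n)
    (fun i j => ENNReal.toReal_nonneg) (hsymm n) (hrow n) (δ := 1 / ((n : ℝ) + 1) ^ 3)
    (by positivity)
  refine ⟨c, hc₀, hc, fun n _ i hi₁ hi₂ => hcrow n i (Finset.mem_Icc.2 ⟨hi₁, hi₂⟩), ?_⟩
  intro ε hε
  obtain ⟨N, hN⟩ := eventually_atTop.1
    (tendsto_one_div_add_atTop_nhds_zero_nat.eventually (gt_mem_nhds hε))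
  refine ⟨N, fun n hn i j hi₁ hi₂ hj₁ hj₂ => ?_⟩
  calc (n : ℝ) ^ 2 * |(ν (Qsq n i j)).toReal - c n i j|
      ≤ n ^ 2 * (1 / ((n : ℝ) + 1) ^ 3) := by
        gcongr
        exact hcerr n i (Finset.mem_Icc.2 ⟨hi₁, hi₂⟩) j (Finset.mem_Icc.2 ⟨hj₁, hj₂⟩)
    _ ≤ 1 / ((n : ℝ) + 1) := by
        rw [mul_one_div, div_le_div_iff₀ (by positivity) (by positivity)]
        nlinarith
    _ < ε := hN n hn
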